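/- arXiv:cs/0606052 — 5 statements merged into one kernel-verified Lean document; each statement's English description precedes it below -/
import Mathlib

section
/- Let G be a connected simple graph on N ≥ 2 vertices with Laplacian L, let α* = 2/(λ₂(L) + λ_N(L)), W = I − α*L, and γ₂ = (λ_N(L) − λ₂(L))/(λ_N(L) + λ₂(L)). For any initial vector x₀ ∈ ℝ^N, define x_i = W^i x₀ and x̄ = ((1/N)·Σ_{j=1}^N (x₀)_j)·𝟙, where 𝟙 is the all-ones vector. Then for every i ≥ 0, ‖x_i − x̄‖ ≤ γ₂^i · ‖x₀ − x̄‖ (Euclidean norm). Moreover γ₂ = (1 − γ)/(1 + γ) where γ = λ₂(L)/λ_N(L). -/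
/-!
The Laplacian `L` is symmetric and, `G` being connected, its kernel consists of the constant
vectors. Thus `x̄` is the component of `x₀` in `ker L`, it is fixed by `W = 1 - α* L`, and `W` maps
`(ker L)ᗮ = range L` into itself. In an orthonormal eigenbasis of `L`, `W` multiplies the
coordinate along an eigenvalue `μ` by `1 - α* μ`; the coordinates of a vector of `(ker L)ᗮ` along
`μ = 0` vanish, and for `μ ∈ [λ₂, λ_N]` the choice of `α*` gives `|1 - α* μ| ≤ γ₂`. Hence `W`
contracts `(ker L)ᗮ` by the factor `γ₂`, and `x_i - x̄ = W^i (x₀ - x̄)`.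
-/

open LinearMap Submodule Matrix WithLp
open scoped RealInnerProductSpace

theorem abs_one_sub_two_div_add_mul_le {l u μ : ℝ} (hl : 0 < l) (hlμ : l ≤ μ) (hμu : μ ≤ u) :
    |1 - 2 / (l + u) * μ| ≤ (u - l) / (u + l) := by
  have hsum : 0 < u + l := by linarith
  rw [abs_le, add_comm l u, div_mul_eq_mul_div, ← neg_div, one_sub_div hsum.ne',
    div_le_div_iff_of_pos_right hsum, div_le_div_iff_of_pos_right hsum]
  constructor <;> linarith

namespace LinearMap.IsSymmetric

variable {E : Type*} [NormedAddCommGroup E] [InnerProductSpace ℝ E] [FiniteDimensional ℝ E]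
  {T : E →ₗ[ℝ] E}

theorem orthogonal_ker_eq_range (hT : T.IsSymmetric) : (ker T)ᗮ = range T := by
  rw [LinearMap.orthogonal_ker, hT.adjoint_eq]

theorem one_sub_smul_apply_mem_orthogonal_ker (hT : T.IsSymmetric) (a : ℝ) {v : E}
    (hv : v ∈ (ker T)ᗮ) : (1 - a • T) v ∈ (ker T)ᗮ := by
  rw [hT.orthogonal_ker_eq_range] at hv ⊢
  exact sub_mem hv (smul_mem _ a (mem_range_self T v))

theorem norm_one_sub_smul_apply_le (hT : T.IsSymmetric) {a c : ℝ}
    (hspec : ∀ μ ∈ spectrum ℝ T, μ ≠ 0 → |1 - a * μ| ≤ c) (hc : 0 ≤ c) {v : E}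
    (hv : v ∈ (ker T)ᗮ) : ‖(1 - a • T) v‖ ≤ c * ‖v‖ := by
  set b := hT.eigenvectorBasis rfl
  set μ := hT.eigenvalues rfl
  have hcoord (k) : b.repr ((1 - a • T) v) k = (1 - a * μ k) * b.repr v k := by
    simp only [sub_apply, Module.End.one_apply, smul_apply, map_sub, map_smul, PiLp.sub_apply,
      PiLp.smul_apply, hT.eigenvectorBasis_apply_self_apply, Real.ringHom_apply, smul_eq_mul, b, μ]
    ring
  have hbound (k) : b.repr ((1 - a • T) v) k ^ 2 ≤ c ^ 2 * b.repr v k ^ 2 := by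
    rw [hcoord, mul_pow]
    by_cases hμ : μ k = 0
    · have hker : b k ∈ ker T := by
        rw [mem_ker, hT.apply_eigenvectorBasis rfl k]
        simp [μ, hμ]
      simp [b.repr_apply_apply, inner_right_of_mem_orthogonal hker hv]
    · have := hspec (μ k) (hT.hasEigenvalue_eigenvalues rfl k).mem_spectrum hμ
      exact mul_le_mul_of_nonneg_right (sq_le_sq.2 (this.trans (le_abs_self c))) (sq_nonneg _)
  have hnorm (x : E) : ‖x‖ ^ 2 = ∑ k, b.repr x k ^ 2 := by
    simp_rw [b.repr_apply_apply, b.sum_sq_inner_right]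
  rw [← sq_le_sq₀ (norm_nonneg _) (by positivity), mul_pow, hnorm, hnorm, Finset.mul_sum]
  exact Finset.sum_le_sum fun k _ => hbound k

theorem norm_one_sub_smul_pow_apply_le (hT : T.IsSymmetric) {a c : ℝ}
    (hspec : ∀ μ ∈ spectrum ℝ T, μ ≠ 0 → |1 - a * μ| ≤ c) (hc : 0 ≤ c) (i : ℕ) {v : E}
    (hv : v ∈ (ker T)ᗮ) : ‖((1 - a • T) ^ i) v‖ ≤ c ^ i * ‖v‖ := by
  induction i generalizing v with
  | zero => simp
  | succ i ih =>
    calc ‖((1 - a • T) ^ (i + 1)) v‖ = ‖((1 - a • T) ^ i) ((1 - a • T) v)‖ := by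
          rw [pow_succ, Module.End.mul_apply]
      _ ≤ c ^ i * (c * ‖v‖) :=
          (ih (hT.one_sub_smul_apply_mem_orthogonal_ker a hv)).trans
            (mul_le_mul_of_nonneg_left (hT.norm_one_sub_smul_apply_le hspec hc hv)
              (pow_nonneg hc i))
      _ = c ^ (i + 1) * ‖v‖ := by ring

theorem norm_one_sub_smul_pow_apply_sub_le (hT : T.IsSymmetric) {a c : ℝ}
    (hspec : ∀ μ ∈ spectrum ℝ T, μ ≠ 0 → |1 - a * μ| ≤ c) (hc : 0 ≤ c) (i : ℕ) {x w : E}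
    (hw : w ∈ ker T) (hxw : x - w ∈ (ker T)ᗮ) :
    ‖((1 - a • T) ^ i) x - w‖ ≤ c ^ i * ‖x - w‖ := by
  have hfix : ((1 - a • T) ^ i) w = w := by
    rw [Module.End.pow_apply]
    exact Function.iterate_fixed (by simp [mem_ker.1 hw]) i
  rw [← hfix, ← map_sub, hfix]
  exact hT.norm_one_sub_smul_pow_apply_le hspec hc i hxw

end LinearMap.IsSymmetric

namespace SimpleGraph

variable {V : Type*} [Fintype V] [DecidableEq V] (G : SimpleGraph V) [DecidableRel G.Adj]

theorem isSymmetric_toLpLin_lapMatrix : (toLpLin 2 2 (G.lapMatrix ℝ)).IsSymmetric :=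
  Matrix.isSymmetric_toEuclideanLin_iff.2 (G.isHermitian_lapMatrix ℝ)

theorem nonneg_of_mem_spectrum_lapMatrix {μ : ℝ} (hμ : μ ∈ spectrum ℝ (G.lapMatrix ℝ)) :
    0 ≤ μ := by
  obtain ⟨i, rfl⟩ := (G.isHermitian_lapMatrix ℝ).spectrum_real_eq_range_eigenvalues ▸ hμ
  exact (posSemidef_lapMatrix ℝ G).eigenvalues_nonneg i

theorem toLp_const_mem_ker_toLpLin_lapMatrix (c : ℝ) :
    toLp 2 (fun _ : V => c) ∈ ker (toLpLin 2 2 (G.lapMatrix ℝ)) := by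
  have hc : (fun _ : V => c) = c • fun _ => (1 : ℝ) := by ext; simp
  rw [mem_ker, toLpLin_toLp, hc, map_smul, toLin'_apply, G.lapMatrix_mulVec_const_eq_zero,
    smul_zero, toLp_zero]

theorem mem_orthogonal_ker_toLpLin_lapMatrix (hG : G.Connected) {v : EuclideanSpace ℝ V}
    (hv : ∑ i, v i = 0) : v ∈ (ker (toLpLin 2 2 (G.lapMatrix ℝ)))ᗮ := by
  obtain ⟨i₀⟩ := hG.nonempty
  refine (mem_orthogonal _ _).2 fun w hw => ?_
  have hconst (i : V) : w i = w i₀ :=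
    G.lapMatrix_mulVec_eq_zero_iff_forall_reachable.1 (congrArg ofLp hw) i i₀
      (hG.preconnected i i₀)
  simp [PiLp.inner_apply, hconst, ← Finset.sum_mul, hv]

end SimpleGraph

theorem stmt0_general (N : ℕ) (G : SimpleGraph (Fin N)) [DecidableRel G.Adj]
    (hconn : G.Connected) (l2 lN : ℝ)
    (hl2 : IsLeast {x : ℝ | x ∈ spectrum ℝ (G.lapMatrix ℝ) ∧ x ≠ 0} l2)
    (hlN : IsGreatest (spectrum ℝ (G.lapMatrix ℝ)) lN)
    (α γ₂ : ℝ) (hα : α = 2 / (l2 + lN)) (hγ₂ : γ₂ = (lN - l2) / (lN + l2))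
    (W : Matrix (Fin N) (Fin N) ℝ) (hW : W = 1 - α • G.lapMatrix ℝ)
    (x0 xbar : Fin N → ℝ)
    (hxbar : xbar = fun _ => (1 / (N : ℝ)) * ∑ j, x0 j) :
    (∀ i : ℕ,
      Real.sqrt (∑ j, ((W ^ i).mulVec x0 j - xbar j) ^ 2)
        ≤ γ₂ ^ i * Real.sqrt (∑ j, (x0 j - xbar j) ^ 2)) ∧
    γ₂ = (1 - l2 / lN) / (1 + l2 / lN) := by
  have hl2_pos : 0 < l2 := (G.nonneg_of_mem_spectrum_lapMatrix hl2.1.1).lt_of_ne' hl2.1.2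
  have hl2_le : l2 ≤ lN := hlN.2 hl2.1.1
  have hlN_pos : 0 < lN := hl2_pos.trans_le hl2_le
  refine ⟨fun i => ?_, by rw [hγ₂]; field_simp⟩
  have hspec : ∀ μ ∈ spectrum ℝ (toLpLin 2 2 (G.lapMatrix ℝ)), μ ≠ 0 → |1 - α * μ| ≤ γ₂ := by
    intro μ hμ hμ0
    rw [spectrum_toLpLin] at hμ
    rw [hα, hγ₂]
    exact abs_one_sub_two_div_add_mul_le hl2_pos (hl2.2 ⟨hμ, hμ0⟩) (hlN.2 hμ)
  have hγ₂_nonneg : 0 ≤ γ₂ := by rw [hγ₂]; exact div_nonneg (by linarith) (by linarith)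
  have hdev_sum : ∑ j, (x0 j - xbar j) = 0 := by
    have : (N : ℝ) ≠ 0 := Nat.cast_ne_zero.2 (Fin.pos_iff_nonempty.2 hconn.nonempty).ne'
    simp only [hxbar, Finset.sum_sub_distrib, Finset.sum_const, Finset.card_univ,
      Fintype.card_fin, nsmul_eq_mul]
    field_simp
    ring
  have key :=
    G.isSymmetric_toLpLin_lapMatrix.norm_one_sub_smul_pow_apply_sub_le hspec hγ₂_nonneg i
      (x := toLp 2 x0) (hxbar ▸ G.toLp_const_mem_ker_toLpLin_lapMatrix _)
      (G.mem_orthogonal_ker_toLpLin_lapMatrix hconn hdev_sum)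
  have hW_lin : toLpLin 2 2 W = 1 - α • toLpLin 2 2 (G.lapMatrix ℝ) := by
    rw [hW, map_sub, map_smul, toLpLin_one]
    rfl
  rw [← hW_lin, ← toLpLin_pow, toLpLin_toLp, toLin'_apply, ← toLp_sub, ← toLp_sub] at key
  simpa [EuclideanSpace.norm_eq] using key

/-- Convergence rate of the equal-weight average-consensus iteration:
for a connected simple graph on `N ≥ 2` vertices with Laplacian `L`, weight
`α* = 2/(λ₂ + λ_N)`, `W = I - α* L` and `γ₂ = (λ_N - λ₂)/(λ_N + λ₂)`, the iterates
`x_i = W^i x₀` satisfy `‖x_i - x̄‖ ≤ γ₂^i ‖x₀ - x̄‖` in the Euclidean norm, where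
`x̄` is the vector all of whose entries are the average of the entries of `x₀`;
moreover `γ₂ = (1 - γ)/(1 + γ)` with `γ = λ₂/λ_N`.  (For a connected graph, the
second smallest Laplacian eigenvalue `λ₂` is the least nonzero element of the
spectrum, and `λ_N` is the greatest element of the spectrum.) -/
theorem stmt0 (N : ℕ) (hN : 2 ≤ N) (G : SimpleGraph (Fin N)) [DecidableRel G.Adj]
    (hconn : G.Connected) (l2 lN : ℝ)
    (hl2 : IsLeast {x : ℝ | x ∈ spectrum ℝ (G.lapMatrix ℝ) ∧ x ≠ 0} l2)
    (hlN : IsGreatest (spectrum ℝ (G.lapMatrix ℝ)) lN)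
    (α γ₂ : ℝ) (hα : α = 2 / (l2 + lN)) (hγ₂ : γ₂ = (lN - l2) / (lN + l2))
    (W : Matrix (Fin N) (Fin N) ℝ) (hW : W = 1 - α • G.lapMatrix ℝ)
    (x0 xbar : Fin N → ℝ)
    (hxbar : xbar = fun _ => (1 / (N : ℝ)) * ∑ j, x0 j) :
    (∀ i : ℕ,
      Real.sqrt (∑ j, ((W ^ i).mulVec x0 j - xbar j) ^ 2)
        ≤ γ₂ ^ i * Real.sqrt (∑ j, (x0 j - xbar j) ^ 2)) ∧
    γ₂ = (1 - l2 / lN) / (1 + l2 / lN) :=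
  stmt0_general N G hconn l2 lN hl2 hlN α γ₂ hα hγ₂ W hW x0 xbar hxbar
end

section
/- Let G be a connected simple graph on N ≥ 2 vertices with Laplacian L, α* = 2/(λ₂(L) + λ_N(L)), and W = I − α*L. Then the matrix powers W^i converge entrywise, as i → ∞, to the rank-one matrix (1/N)·𝟙𝟙ᵀ, where 𝟙 is the all-ones column vector. -/
/-!
Write `W = f(L)` with `f x = 1 - α x`, so that `W ^ i = (f ^ i)(L)` by the functional calculus of
the symmetric matrix `L`. The spectrum of `L` lies in `{0} ∪ [λ₂, λ_N]`, and for `0 < x ≤ λ_N`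
we have `|1 - 2x / (λ₂ + λ_N)| < 1` because `λ₂ > 0`, so `f ^ i` converges on the spectrum to
the indicator of `{0}`. Hence `W ^ i` converges to the orthogonal projection onto `ker L`, which
for a connected graph is the line spanned by `𝟙`, i.e. to `(1/N) 𝟙 𝟙ᵀ`.
-/

open Filter Topology Matrix

theorem Set.Finite.tendstoUniformlyOn_of_tendsto {ι α β : Type*} [PseudoMetricSpace β]
    {l : Filter ι} {F : ι → α → β} {f : α → β} {s : Set α} (hs : s.Finite)
    (h : ∀ x ∈ s, Tendsto (F · x) l (𝓝 (f x))) : TendstoUniformlyOn F f l s := by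
  refine Metric.tendstoUniformlyOn_iff.mpr fun ε hε => hs.eventually_all.mpr fun x hx => ?_
  exact (Metric.tendsto_nhds.mp (h x hx) ε hε).mono fun i hi => by rwa [dist_comm]

theorem abs_one_sub_two_div_mul_lt_one {x s : ℝ} (hx : 0 < x) (hxs : x < s) :
    |1 - 2 / s * x| < 1 := by
  have hs : 0 < s := hx.trans hxs
  have hlt : 2 / s * x < 2 := by
    rw [div_mul_eq_mul_div, div_lt_iff₀ hs]
    linarith
  have hpos : 0 < 2 / s * x := by positivity
  rw [abs_lt]
  constructor <;> linarith

namespace Matrix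

variable {n 𝕜 : Type*} [Fintype n] [DecidableEq n] [RCLike 𝕜] {A : Matrix n n 𝕜}

theorem tendsto_cfc_of_tendsto_on_spectrum {ι : Type*} {l : Filter ι} {F : ι → ℝ → ℝ}
    {f : ℝ → ℝ} (h : ∀ x ∈ spectrum ℝ A, Tendsto (F · x) l (𝓝 (f x))) :
    Tendsto (fun i => cfc (F i) A) l (𝓝 (cfc f A)) :=
  tendsto_cfc_fun (A.finite_real_spectrum.tendstoUniformlyOn_of_tendsto h)
    (Eventually.of_forall fun i => A.finite_real_spectrum.continuousOn (F i))

/- Since `0⁻¹ = 0`, the function `x ↦ 1 - x⁻¹ * x` is the indicator of `{0}`, and its image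
under the functional calculus is the orthogonal projection onto `ker A`. -/
theorem IsHermitian.cfc_one_sub_inv_mul_self_mul_self (hA : A.IsHermitian) :
    cfc (fun x : ℝ => 1 - x⁻¹ * x) A * A = 0 := by
  conv_lhs => enter [2]; rw [← cfc_id' ℝ A hA.isSelfAdjoint]
  rw [← cfc_mul _ _ A (A.finite_real_spectrum.continuousOn _)
    (A.finite_real_spectrum.continuousOn _)]
  have hzero : (fun x : ℝ => (1 - x⁻¹ * x) * x) = 0 := by
    funext x
    by_cases hx : x = 0 <;> simp [hx]
  rw [hzero, cfc_zero]

theorem IsHermitian.cfc_one_sub_inv_mul_self_mulVec (hA : A.IsHermitian) {v : n → 𝕜}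
    (hv : A *ᵥ v = 0) : cfc (fun x : ℝ => 1 - x⁻¹ * x) A *ᵥ v = v := by
  have hsplit : cfc (fun x : ℝ => 1 - x⁻¹ * x) A = 1 - cfc (fun x : ℝ => x⁻¹) A * A := by
    rw [cfc_sub _ _ A (A.finite_real_spectrum.continuousOn _)
        (A.finite_real_spectrum.continuousOn _),
      cfc_const_one ℝ A, cfc_mul _ _ A (A.finite_real_spectrum.continuousOn _)
        (A.finite_real_spectrum.continuousOn _), cfc_id' ℝ A hA.isSelfAdjoint]
  rw [hsplit, sub_mulVec, one_mulVec, ← mulVec_mulVec, hv, mulVec_zero, sub_zero]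

end Matrix

namespace SimpleGraph

variable {V : Type*} [Fintype V] [DecidableEq V] {G : SimpleGraph V} [DecidableRel G.Adj]

theorem eq_smul_vecMulVec_of_mul_lapMatrix_eq_zero (hG : G.Connected) {Q : Matrix V V ℝ}
    (hQL : Q * G.lapMatrix ℝ = 0) (hQ1 : Q *ᵥ (fun _ => 1) = fun _ => 1) :
    Q = (Fintype.card V : ℝ)⁻¹ • vecMulVec (fun _ => 1) (fun _ => 1) := by
  ext i j
  have hrow : G.lapMatrix ℝ *ᵥ (fun k => Q i k) = 0 := by
    rw [← vecMul_transpose, (G.isSymm_lapMatrix (R := ℝ)).eq]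
    exact congr_fun hQL i
  have hconst : ∀ k, Q i k = Q i j := fun k =>
    (G.lapMatrix_mulVec_eq_zero_iff_forall_reachable.mp hrow) k j (hG.preconnected k j)
  have hsum : (Fintype.card V : ℝ) * Q i j = 1 := by
    simpa [mulVec, dotProduct, hconst] using congr_fun hQ1 i
  simpa [vecMulVec_apply] using eq_inv_of_mul_eq_one_right hsum

end SimpleGraph

theorem stmt3_general (N : ℕ) (G : SimpleGraph (Fin N)) [DecidableRel G.Adj]
    (hconn : G.Connected) (l2 lN : ℝ)
    (hl2 : IsLeast {x : ℝ | x ∈ spectrum ℝ (G.lapMatrix ℝ) ∧ x ≠ 0} l2)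
    (hlN : IsGreatest (spectrum ℝ (G.lapMatrix ℝ)) lN)
    (α : ℝ) (hα : α = 2 / (l2 + lN))
    (W : Matrix (Fin N) (Fin N) ℝ) (hW : W = 1 - α • G.lapMatrix ℝ) :
    ∀ m n : Fin N,
      Tendsto (fun i : ℕ => (W ^ i) m n) atTop
        (nhds ((((N : ℝ))⁻¹ • Matrix.vecMulVec (fun _ : Fin N => (1 : ℝ))
          (fun _ : Fin N => (1 : ℝ))) m n)) := by
  intro m n
  set L := G.lapMatrix ℝ
  have hL : L.IsHermitian := G.isHermitian_lapMatrix ℝ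
  have hpow (i : ℕ) : W ^ i = cfc (fun x => (1 - α * x) ^ i) L := by
    rw [cfc_pow _ _ _ (L.finite_real_spectrum.continuousOn _), cfc_sub _ _ L, cfc_const_one ℝ L,
      cfc_const_mul_id α L hL.isSelfAdjoint, hW]
  have hspec_nonneg : ∀ x ∈ spectrum ℝ L, 0 ≤ x :=
    (posSemidef_iff_isHermitian_and_spectrum_nonneg.mp (G.posSemidef_lapMatrix ℝ)).2
  have hl2_pos : 0 < l2 := lt_of_le_of_ne (hspec_nonneg l2 hl2.1.1) hl2.1.2.symm
  have hlim : Tendsto (W ^ ·) atTop (𝓝 (cfc (fun x : ℝ => 1 - x⁻¹ * x) L)) := by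
    simp_rw [hpow]
    refine tendsto_cfc_of_tendsto_on_spectrum fun x hx => ?_
    rcases (hspec_nonneg x hx).eq_or_lt with rfl | hx_pos
    · simp
    · have hx_lt : x < l2 + lN := by linarith [hlN.2 hx]
      rw [inv_mul_cancel₀ hx_pos.ne', sub_self]
      exact tendsto_pow_atTop_nhds_zero_of_abs_lt_one
        (hα ▸ abs_one_sub_two_div_mul_lt_one hx_pos hx_lt)
  have hproj : cfc (fun x : ℝ => 1 - x⁻¹ * x) L
      = (N : ℝ)⁻¹ • vecMulVec (fun _ : Fin N => (1 : ℝ)) (fun _ => 1) := by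
    simpa using SimpleGraph.eq_smul_vecMulVec_of_mul_lapMatrix_eq_zero hconn
      hL.cfc_one_sub_inv_mul_self_mul_self
      (hL.cfc_one_sub_inv_mul_self_mulVec G.lapMatrix_mulVec_const_eq_zero)
  exact hproj ▸ ((continuous_id.matrix_elem m n).tendsto _).comp hlim

/-- For a connected simple graph on `N ≥ 2` vertices with Laplacian `L`,
`α* = 2/(λ₂(L) + λ_N(L))` and `W = I - α* L`, the powers `W^i` converge entrywise, as
`i → ∞`, to the rank-one matrix `(1/N) 𝟙 𝟙ᵀ` (all of whose entries are `1/N`). -/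
theorem stmt3 (N : ℕ) (hN : 2 ≤ N) (G : SimpleGraph (Fin N)) [DecidableRel G.Adj]
    (hconn : G.Connected) (l2 lN : ℝ)
    (hl2 : IsLeast {x : ℝ | x ∈ spectrum ℝ (G.lapMatrix ℝ) ∧ x ≠ 0} l2)
    (hlN : IsGreatest (spectrum ℝ (G.lapMatrix ℝ)) lN)
    (α : ℝ) (hα : α = 2 / (l2 + lN))
    (W : Matrix (Fin N) (Fin N) ℝ) (hW : W = 1 - α • G.lapMatrix ℝ) :
    ∀ m n : Fin N,
      Tendsto (fun i : ℕ => (W ^ i) m n) atTop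
        (nhds ((((N : ℝ))⁻¹ • Matrix.vecMulVec (fun _ : Fin N => (1 : ℝ))
          (fun _ : Fin N => (1 : ℝ))) m n)) :=
  stmt3_general N G hconn l2 lN hl2 hlN α hα W hW
end

section
/- Let G be a connected simple graph on N ≥ 2 vertices with Laplacian L, α* = 2/(λ₂(L) + λ_N(L)), W = I − α*L, and γ₂ = (λ_N(L) − λ₂(L))/(λ_N(L) + λ₂(L)). Then for every integer k ≥ 0 and every index n ∈ {1,…,N}, the diagonal entry of the even power of W satisfies (W^{2k})_{nn} ≤ 1/N + γ₂^{2k}·(1 − 1/N). -/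
/-!
In an orthonormal eigenbasis `vⱼ` of `L` (eigenvalues `μⱼ`), `(W^{2k})ₙₙ = ∑ⱼ (1 - α* μⱼ)^{2k} vⱼ(n)²`
is a weighted average of the coefficients, as `∑ⱼ vⱼ(n)² = 1`. Every nonzero `μⱼ` lies in
`[λ₂, λ_N]`, where `|1 - α* x| ≤ γ₂`. Since `G` is connected, `ker L` is spanned by `𝟙`, so at most
one `vⱼ` has eigenvalue `0`, and that one satisfies `vⱼ(n)² = 1/N`.
-/
open Matrix Finset

lemma abs_one_sub_two_div_mul_le {a b x : ℝ} (hab : 0 < a + b) (hax : a ≤ x) (hxb : x ≤ b) :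
    |1 - 2 / (a + b) * x| ≤ (b - a) / (b + a) := by
  have h : 1 - 2 / (a + b) * x = (a + b - 2 * x) / (b + a) := by
    rw [add_comm b a]; field_simp
  rw [h, abs_div, abs_of_pos (by linarith : 0 < b + a)]
  exact div_le_div_of_nonneg_right (abs_le.mpr ⟨by linarith, by linarith⟩) (by linarith)

lemma Finset.sum_mul_le_add_mul_one_sub {ι : Type*} [Fintype ι] (p : ι → Prop) [DecidablePred p]
    {c w : ι → ℝ} {g z : ℝ} (hw : ∀ i, 0 ≤ w i) (hw_sum : ∑ i, w i = 1)
    (hc_p : ∀ i, p i → c i ≤ 1) (hc_not_p : ∀ i, ¬ p i → c i ≤ g) (hg : g ≤ 1)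
    (hz : ∑ i with p i, w i ≤ z) :
    ∑ i, c i * w i ≤ z + g * (1 - z) := by
  set Z := ∑ i with p i, w i
  have hZ_compl : ∑ i with ¬ p i, w i = 1 - Z := by
    rw [← hw_sum, ← sum_filter_add_sum_filter_not univ p w]; ring
  calc ∑ i, c i * w i
      = ∑ i with p i, c i * w i + ∑ i with ¬ p i, c i * w i :=
        (sum_filter_add_sum_filter_not univ p _).symm
    _ ≤ ∑ i with p i, w i + ∑ i with ¬ p i, g * w i := by
        gcongr with i hi i hi
        · exact mul_le_of_le_one_left (hw i) (hc_p i (mem_filter.mp hi).2)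
        · exact hw i
        · exact hc_not_p i (mem_filter.mp hi).2
    _ = g + (1 - g) * Z := by rw [← mul_sum, hZ_compl]; ring
    _ ≤ z + g * (1 - z) := by nlinarith

namespace Matrix.IsHermitian
variable {n : Type*} [Fintype n] [DecidableEq n] {A : Matrix n n ℝ}

lemma cfc_apply_self (hA : A.IsHermitian) (f : ℝ → ℝ) (i : n) :
    cfc f A i i = ∑ j, f (hA.eigenvalues j) * hA.eigenvectorBasis j i ^ 2 := by
  rw [hA.cfc_eq, IsHermitian.cfc, Unitary.conjStarAlgAut_apply, mul_apply]
  simp [mul_diagonal, sq, mul_comm, mul_left_comm]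

lemma sum_sq_eigenvectorBasis_apply (hA : A.IsHermitian) (i : n) :
    ∑ j, hA.eigenvectorBasis j i ^ 2 = 1 := by
  simpa [cfc_const_one ℝ A] using (hA.cfc_apply_self (fun _ => 1) i).symm

lemma one_sub_smul_pow_eq_cfc (hA : A.IsHermitian) (α : ℝ) (m : ℕ) :
    (1 - α • A) ^ m = cfc (fun x => (1 - α * x) ^ m) A := by
  rw [cfc_pow .., cfc_sub .., cfc_const_one ℝ A, cfc_const_mul .., cfc_id' ℝ A]

end Matrix.IsHermitian

namespace SimpleGraph.Connected
variable {V : Type*} [Fintype V] [DecidableEq V] {G : SimpleGraph V} [DecidableRel G.Adj]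
  (hL : (G.lapMatrix ℝ).IsHermitian)

lemma eigenvectorBasis_lapMatrix_apply_eq (hG : G.Connected) {i : V} (hi : hL.eigenvalues i = 0)
    (a b : V) :
    hL.eigenvectorBasis i a = hL.eigenvectorBasis i b := by
  refine (lapMatrix_mulVec_eq_zero_iff_forall_reachable G).mp ?_ a b (hG.preconnected a b)
  rw [hL.mulVec_eigenvectorBasis, hi, zero_smul]

lemma sq_eigenvectorBasis_lapMatrix_apply (hG : G.Connected) {i : V} (hi : hL.eigenvalues i = 0)
    (a : V) :
    hL.eigenvectorBasis i a ^ 2 = 1 / Fintype.card V := by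
  have h := EuclideanSpace.norm_sq_eq (hL.eigenvectorBasis i)
  simp only [hL.eigenvectorBasis.orthonormal.1 i, Real.norm_eq_abs, sq_abs,
    hG.eigenvectorBasis_lapMatrix_apply_eq hL hi _ a, sum_const, card_univ, nsmul_eq_mul,
    one_pow] at h
  rw [eq_div_iff_mul_eq (by rintro h0; simp [h0] at h)]
  linarith

lemma eq_of_eigenvalues_lapMatrix_eq_zero (hG : G.Connected) {i j : V}
    (hi : hL.eigenvalues i = 0) (hj : hL.eigenvalues j = 0) : i = j := by
  by_contra hij
  have horth := hL.eigenvectorBasis.orthonormal.2 hij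
  simp only [PiLp.inner_apply, hG.eigenvectorBasis_lapMatrix_apply_eq hL hi _ i,
    hG.eigenvectorBasis_lapMatrix_apply_eq hL hj _ i] at horth
  have hcard : (Fintype.card V : ℝ) ≠ 0 :=
    Nat.cast_ne_zero.mpr (Fintype.card_pos_iff.mpr ⟨i⟩).ne'
  simp only [sum_const, card_univ, nsmul_eq_mul, mul_eq_zero, hcard, false_or,
    RCLike.inner_apply, conj_trivial] at horth
  have hci := hG.sq_eigenvectorBasis_lapMatrix_apply hL hi i
  have hcj := hG.sq_eigenvectorBasis_lapMatrix_apply hL hj i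
  rcases horth with h0 | h0 <;> simp [h0, hcard.symm] at hci hcj

lemma sum_sq_eigenvectorBasis_lapMatrix_le (hG : G.Connected) (a : V) :
    ∑ i with hL.eigenvalues i = 0, hL.eigenvectorBasis i a ^ 2 ≤ 1 / Fintype.card V := by
  have hcard : #{i | hL.eigenvalues i = 0} ≤ 1 := card_le_one.mpr fun i hi j hj ↦
    hG.eq_of_eigenvalues_lapMatrix_eq_zero hL (mem_filter.mp hi).2 (mem_filter.mp hj).2
  rw [sum_congr rfl fun i hi ↦ hG.sq_eigenvectorBasis_lapMatrix_apply hL (mem_filter.mp hi).2 a,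
    sum_const, nsmul_eq_mul]
  exact mul_le_of_le_one_left (by positivity) (by exact_mod_cast hcard)

end SimpleGraph.Connected

theorem stmt7_general (N : ℕ) (G : SimpleGraph (Fin N)) [DecidableRel G.Adj]
    (hconn : G.Connected) (l2 lN : ℝ)
    (hl2 : IsLeast {x : ℝ | x ∈ spectrum ℝ (G.lapMatrix ℝ) ∧ x ≠ 0} l2)
    (hlN : IsGreatest (spectrum ℝ (G.lapMatrix ℝ)) lN)
    (α γ₂ : ℝ) (hα : α = 2 / (l2 + lN)) (hγ₂ : γ₂ = (lN - l2) / (lN + l2))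
    (W : Matrix (Fin N) (Fin N) ℝ) (hW : W = 1 - α • G.lapMatrix ℝ) :
    ∀ (k : ℕ) (n : Fin N),
      (W ^ (2 * k)) n n ≤ 1 / (N : ℝ) + γ₂ ^ (2 * k) * (1 - 1 / (N : ℝ)) := by
  intro k n
  have hL := G.isHermitian_lapMatrix ℝ
  have hl2_pos : 0 < l2 := lt_of_le_of_ne'
    ((posSemidef_iff_isHermitian_and_spectrum_nonneg.mp (G.posSemidef_lapMatrix ℝ)).2 hl2.1.1)
    hl2.1.2
  have hl2_le : l2 ≤ lN := hlN.2 hl2.1.1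
  have hcoef : ∀ j, hL.eigenvalues j ≠ 0 → (1 - α * hL.eigenvalues j) ^ (2 * k) ≤ γ₂ ^ (2 * k) :=
    fun j hj ↦ by
      have hmem := hL.eigenvalues_mem_spectrum_real j
      rw [← (even_two_mul k).pow_abs, hα, hγ₂]
      exact pow_le_pow_left₀ (abs_nonneg _)
        (abs_one_sub_two_div_mul_le (by linarith) (hl2.2 ⟨hmem, hj⟩) (hlN.2 hmem)) _
  have hγ₂_pow_le : γ₂ ^ (2 * k) ≤ 1 := by
    rw [hγ₂]
    exact pow_le_one₀ (div_nonneg (by linarith) (by linarith))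
      ((div_le_one (by linarith)).mpr (by linarith))
  rw [hW, hL.one_sub_smul_pow_eq_cfc, hL.cfc_apply_self]
  simpa using Finset.sum_mul_le_add_mul_one_sub (fun j ↦ hL.eigenvalues j = 0)
    (fun j ↦ sq_nonneg _) (hL.sum_sq_eigenvectorBasis_apply n) (fun j hj ↦ by simp [hj])
    hcoef hγ₂_pow_le (hconn.sum_sq_eigenvectorBasis_lapMatrix_le hL n)

/-- Diagonal entries of even powers of the optimal consensus matrix:
for a connected simple graph on `N ≥ 2` vertices, `W = I - α* L` with
`α* = 2/(λ₂(L)+λ_N(L))` and `γ₂ = (λ_N(L)-λ₂(L))/(λ_N(L)+λ₂(L))`, one has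
`(W^{2k})_{nn} ≤ 1/N + γ₂^{2k} (1 - 1/N)` for all `k ≥ 0` and all `n`. -/
theorem stmt7 (N : ℕ) (hN : 2 ≤ N) (G : SimpleGraph (Fin N)) [DecidableRel G.Adj]
    (hconn : G.Connected) (l2 lN : ℝ)
    (hl2 : IsLeast {x : ℝ | x ∈ spectrum ℝ (G.lapMatrix ℝ) ∧ x ≠ 0} l2)
    (hlN : IsGreatest (spectrum ℝ (G.lapMatrix ℝ)) lN)
    (α γ₂ : ℝ) (hα : α = 2 / (l2 + lN)) (hγ₂ : γ₂ = (lN - l2) / (lN + l2))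
    (W : Matrix (Fin N) (Fin N) ℝ) (hW : W = 1 - α • G.lapMatrix ℝ) :
    ∀ (k : ℕ) (n : Fin N),
      (W ^ (2 * k)) n n ≤ 1 / (N : ℝ) + γ₂ ^ (2 * k) * (1 - 1 / (N : ℝ)) :=
  stmt7_general N G hconn l2 lN hl2 hlN α γ₂ hα hγ₂ W hW
end

section
/- Let G be a connected simple graph on N ≥ 2 vertices with Laplacian L, α* = 2/(λ₂(L) + λ_N(L)), W = I − α*L, and γ₂ = (λ_N(L) − λ₂(L))/(λ_N(L) + λ₂(L)). Let X₀ be a square-integrable random vector in ℝ^N with Cov(X₀) = (4μ²/σ²)·I, and define the noiseless consensus iteration X_i = W^i X₀. Then for every iteration i ≥ 0 and every coordinate n, Var(X_n(i)) ≤ (4μ²/σ²)·[1/N + γ₂^{2i}(1 − 1/N)]; in particular this upper bound converges to 4μ²/(Nσ²), the variance of the centralized (fusion-center) statistic, as i → ∞. -/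
/-!
Since `Cov(X₀) = c • 1` with `c = 4μ²/σ²`, the variance of `X_n(i) = (W^i)ₙ ⬝ᵥ X₀` is
`c ‖(W^i)ₙ‖²`. Split `eₙ = v + 𝟙/N` with `∑ v = 0`. The matrix `W` is symmetric and fixes `𝟙`,
so `(W^i)ₙ = W^i v + 𝟙/N` with `W^i v` again of mean zero, and `‖(W^i)ₙ‖² = ‖W^i v‖² + 1/N`.
On mean-zero vectors only eigenvectors of `L` with eigenvalue `λ ∈ [λ₂, λ_N]` matter (connectedness
makes the kernel of `L` the constants), and for those `(1 - α* λ)² ≤ γ₂²`; hence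
`‖W^i v‖² ≤ γ₂^{2i} ‖v‖² = γ₂^{2i} (1 - 1/N)`.
-/

open MeasureTheory Filter Matrix ProbabilityTheory

lemma OrthonormalBasis.dotProduct_self_eq_sum_sq {ι : Type*} [Fintype ι]
    (b : OrthonormalBasis ι ℝ (EuclideanSpace ℝ ι)) (u : ι → ℝ) :
    u ⬝ᵥ u = ∑ j, (⇑(b j) ⬝ᵥ u) ^ 2 := by
  have := b.sum_inner_mul_inner (WithLp.toLp 2 u) (WithLp.toLp 2 u)
  simp only [EuclideanSpace.inner_eq_star_dotProduct, star_trivial] at this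
  rw [← this]
  refine Finset.sum_congr rfl fun j _ => ?_
  rw [sq, dotProduct_comm]

lemma Matrix.mem_spectrum_of_mulVec_eq_smul {ι : Type*} [Fintype ι] [DecidableEq ι]
    {A : Matrix ι ι ℝ} {x : ι → ℝ} {μ : ℝ} (hx : x ≠ 0) (hAx : A *ᵥ x = μ • x) :
    μ ∈ spectrum ℝ A := by
  rw [← Matrix.spectrum_toLin']
  exact (Module.End.hasEigenvalue_of_hasEigenvector
    ⟨Module.End.mem_eigenspace_iff.2 (by simpa using hAx), hx⟩).mem_spectrum

theorem Matrix.IsSymm.mulVec_dotProduct_mulVec_le {ι : Type*} [Fintype ι] [DecidableEq ι]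
    {W : Matrix ι ι ℝ} (hWs : W.IsSymm) {r : ℝ} {v : ι → ℝ}
    (h : ∀ (x : ι → ℝ) (μ : ℝ), W *ᵥ x = μ • x → x ⬝ᵥ v ≠ 0 → μ ^ 2 ≤ r) :
    (W *ᵥ v) ⬝ᵥ (W *ᵥ v) ≤ r * (v ⬝ᵥ v) := by
  have hW : W.IsHermitian := isHermitian_iff_isSymm.2 hWs
  set b := hW.eigenvectorBasis
  have hcoef (j) : ⇑(b j) ⬝ᵥ (W *ᵥ v) = hW.eigenvalues j * (⇑(b j) ⬝ᵥ v) := by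
    rw [dotProduct_mulVec, ← mulVec_transpose, hWs.eq, hW.mulVec_eigenvectorBasis,
      smul_dotProduct, smul_eq_mul]
  rw [b.dotProduct_self_eq_sum_sq, b.dotProduct_self_eq_sum_sq, Finset.mul_sum]
  refine Finset.sum_le_sum fun j _ => ?_
  rw [hcoef, mul_pow]
  by_cases hj : ⇑(b j) ⬝ᵥ v = 0
  · simp [hj]
  · exact mul_le_mul_of_nonneg_right (h _ _ (hW.mulVec_eigenvectorBasis j) hj) (sq_nonneg _)

lemma sq_one_sub_two_div_add_mul_le {a b t : ℝ} (hab : 0 < a + b) (hat : a ≤ t) (htb : t ≤ b) :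
    (1 - 2 / (a + b) * t) ^ 2 ≤ ((b - a) / (b + a)) ^ 2 := by
  rw [show 1 - 2 / (a + b) * t = (a + b - 2 * t) / (a + b) by field_simp, add_comm b a,
    div_pow, div_pow]
  refine div_le_div_of_nonneg_right ?_ (by positivity)
  -- `(a + b - 2t)² - (b - a)² = 4 (t - a) (t - b) ≤ 0`
  nlinarith [mul_nonneg (sub_nonneg.2 hat) (sub_nonneg.2 htb)]

namespace SimpleGraph

variable {V : Type*} [Fintype V] [DecidableEq V] {G : SimpleGraph V} [DecidableRel G.Adj]

lemma nonneg_of_mem_spectrum_lapMatrix_s10 {x : ℝ} (hx : x ∈ spectrum ℝ (G.lapMatrix ℝ)) : 0 ≤ x := by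
  have hL := posSemidef_lapMatrix ℝ G
  rw [hL.isHermitian.spectrum_real_eq_range_eigenvalues] at hx
  obtain ⟨j, rfl⟩ := hx
  exact hL.eigenvalues_nonneg j

lemma Connected.dotProduct_eq_zero_of_lapMatrix_mulVec_eq_zero (hG : G.Connected)
    {x v : V → ℝ} (hx : G.lapMatrix ℝ *ᵥ x = 0) (hv : ∑ i, v i = 0) : x ⬝ᵥ v = 0 := by
  obtain ⟨i₀⟩ := hG.nonempty
  have hconst : x = fun _ => x i₀ := funext fun i =>
    (lapMatrix_mulVec_eq_zero_iff_forall_reachable G).1 hx i i₀ (hG.preconnected i i₀)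
  rw [hconst, dotProduct, ← Finset.mul_sum, hv, mul_zero]

theorem Connected.one_sub_smul_lapMatrix_mulVec_dotProduct_le (hG : G.Connected) {l2 lN : ℝ}
    (hl2 : IsLeast {x : ℝ | x ∈ spectrum ℝ (G.lapMatrix ℝ) ∧ x ≠ 0} l2)
    (hlN : IsGreatest (spectrum ℝ (G.lapMatrix ℝ)) lN) {v : V → ℝ} (hv : ∑ i, v i = 0) :
    ((1 - (2 / (l2 + lN)) • G.lapMatrix ℝ) *ᵥ v) ⬝ᵥ ((1 - (2 / (l2 + lN)) • G.lapMatrix ℝ) *ᵥ v)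
      ≤ ((lN - l2) / (lN + l2)) ^ 2 * (v ⬝ᵥ v) := by
  have hl2_pos : 0 < l2 :=
    (G.nonneg_of_mem_spectrum_lapMatrix_s10 hl2.1.1).lt_of_ne' hl2.1.2
  have hsum_pos : 0 < l2 + lN := by linarith [hlN.2 hl2.1.1]
  set α := 2 / (l2 + lN)
  have hα : α ≠ 0 := by positivity
  refine (isSymm_one.sub ((G.isSymm_lapMatrix (R := ℝ)).smul α)).mulVec_dotProduct_mulVec_le
    fun x μ hx hxv => ?_
  set t := (1 - μ) / α
  have hLx : G.lapMatrix ℝ *ᵥ x = t • x := by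
    ext i
    have hxi := congrFun hx i
    simp only [sub_mulVec, one_mulVec, smul_mulVec, Pi.sub_apply, Pi.smul_apply,
      smul_eq_mul] at hxi ⊢
    rw [div_mul_eq_mul_div, eq_div_iff hα]
    linear_combination -hxi
  have hx0 : x ≠ 0 := by rintro rfl; simp at hxv
  have ht_mem : t ∈ spectrum ℝ (G.lapMatrix ℝ) := mem_spectrum_of_mulVec_eq_smul hx0 hLx
  have ht0 : t ≠ 0 := by
    rintro ht
    rw [ht, zero_smul] at hLx
    exact hxv (hG.dotProduct_eq_zero_of_lapMatrix_mulVec_eq_zero hLx hv)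
  have hμ : μ = 1 - α * t := by rw [mul_div_cancel₀ _ hα]; ring
  rw [hμ]
  exact sq_one_sub_two_div_add_mul_le hsum_pos (hl2.2 ⟨ht_mem, ht0⟩) (hlN.2 ht_mem)

end SimpleGraph

namespace Matrix

variable {ι : Type*} [Fintype ι] {M : Matrix ι ι ℝ}

lemma dotProduct_add_smul_one_self {w : ι → ℝ} (hw : ∑ i, w i = 0) (c : ℝ) :
    (w + c • 1) ⬝ᵥ (w + c • 1) = w ⬝ᵥ w + c ^ 2 * Fintype.card ι := by
  simp only [add_dotProduct, dotProduct_add, smul_dotProduct, dotProduct_smul, one_dotProduct_one]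
  simp only [one_dotProduct, dotProduct_one, hw, smul_eq_mul]
  ring

lemma IsSymm.sum_mulVec (hM : M.IsSymm) (h1 : M *ᵥ 1 = 1) (v : ι → ℝ) :
    ∑ i, (M *ᵥ v) i = ∑ i, v i := by
  rw [← one_dotProduct, ← one_dotProduct, dotProduct_mulVec, ← mulVec_transpose, hM.eq, h1]

lemma pow_mulVec_eq_self [DecidableEq ι] {v : ι → ℝ} (h : M *ᵥ v = v) (k : ℕ) :
    M ^ k *ᵥ v = v := by
  induction k with
  | zero => simp
  | succ k ih => rw [pow_succ, ← mulVec_mulVec, h, ih]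

lemma IsSymm.pow_mulVec_dotProduct_le [DecidableEq ι] (hM : M.IsSymm) (h1 : M *ᵥ 1 = 1) {r : ℝ}
    (hr : 0 ≤ r)
    (hcontr : ∀ v : ι → ℝ, ∑ i, v i = 0 → (M *ᵥ v) ⬝ᵥ (M *ᵥ v) ≤ r * (v ⬝ᵥ v))
    (k : ℕ) {v : ι → ℝ} (hv : ∑ i, v i = 0) :
    (M ^ k *ᵥ v) ⬝ᵥ (M ^ k *ᵥ v) ≤ r ^ k * (v ⬝ᵥ v) := by
  induction k generalizing v with
  | zero => simp
  | succ k ih =>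
    rw [pow_succ, ← mulVec_mulVec]
    calc (M ^ k *ᵥ M *ᵥ v) ⬝ᵥ (M ^ k *ᵥ M *ᵥ v) ≤ r ^ k * ((M *ᵥ v) ⬝ᵥ (M *ᵥ v)) :=
          ih (by rw [hM.sum_mulVec h1, hv])
      _ ≤ r ^ k * (r * (v ⬝ᵥ v)) := by gcongr; exact hcontr v hv
      _ = r ^ (k + 1) * (v ⬝ᵥ v) := by ring

lemma IsSymm.row_dotProduct_self_le [DecidableEq ι] (hM : M.IsSymm) (h1 : M *ᵥ 1 = 1) {r : ℝ}
    (hcontr : ∀ v : ι → ℝ, ∑ i, v i = 0 → (M *ᵥ v) ⬝ᵥ (M *ᵥ v) ≤ r * (v ⬝ᵥ v)) (n : ι) :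
    M n ⬝ᵥ M n ≤ 1 / Fintype.card ι + r * (1 - 1 / Fintype.card ι) := by
  have hcard : (Fintype.card ι : ℝ) ≠ 0 := by
    have : Nonempty ι := ⟨n⟩
    positivity
  set c : ℝ := 1 / Fintype.card ι
  have hc : c ^ 2 * Fintype.card ι = c := by
    rw [sq, mul_assoc, one_div_mul_cancel hcard, mul_one]
  set v : ι → ℝ := Pi.single n 1 - c • 1
  have hsingle : Pi.single n (1 : ℝ) = v + c • 1 := (sub_add_cancel _ _).symm
  have hv : ∑ i, v i = 0 := by
    simp [v, Finset.sum_sub_distrib, c, hcard]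
  have hvv : v ⬝ᵥ v = 1 - c := by
    have := dotProduct_add_smul_one_self hv c
    rw [← hsingle, single_dotProduct, Pi.single_eq_same, hc] at this
    linarith
  have hrow : M n = M *ᵥ v + c • 1 := by
    calc M n = M *ᵥ Pi.single n 1 := funext fun i => by
          rw [mulVec_single_one]; exact (hM.apply n i).symm
      _ = M *ᵥ v + c • 1 := by rw [hsingle, mulVec_add, mulVec_smul, h1]
  have hMv := hcontr v hv
  rw [hvv] at hMv
  rw [hrow, dotProduct_add_smul_one_self (by rw [hM.sum_mulVec h1, hv]) c, hc]
  linarith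

end Matrix

lemma ProbabilityTheory.covariance_dotProduct_self_of_covariance_eq_smul_one {Ω ι : Type*}
    [MeasurableSpace Ω] {P : Measure Ω} [IsFiniteMeasure P] [Fintype ι] [DecidableEq ι]
    {Z : Ω → ι → ℝ} (hZ : ∀ i, MemLp (fun ω => Z ω i) 2 P) {c : ℝ}
    (hcov : Matrix.of (fun i j => cov[fun ω => Z ω i, fun ω => Z ω j; P]) = c • 1)
    (a : ι → ℝ) :
    cov[fun ω => a ⬝ᵥ Z ω, fun ω => a ⬝ᵥ Z ω; P] = c * (a ⬝ᵥ a) := by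
  have hcov_apply (i j : ι) :
      cov[fun ω => Z ω i, fun ω => Z ω j; P] = c * (1 : Matrix ι ι ℝ) i j :=
    congrFun (congrFun hcov i) j
  simp only [dotProduct]
  rw [covariance_fun_sum_fun_sum (X := fun i ω => a i * Z ω i) (Y := fun i ω => a i * Z ω i)
    (fun i => (hZ i).const_mul _) (fun i => (hZ i).const_mul _)]
  simp only [covariance_const_mul_left, covariance_const_mul_right, hcov_apply, one_apply]
  simp only [mul_ite, mul_one, mul_zero, Finset.sum_ite_eq, Finset.mem_univ, ↓reduceIte,
    Finset.mul_sum]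
  exact Finset.sum_congr rfl fun i _ => by ring

theorem stmt10_general (N : ℕ) (G : SimpleGraph (Fin N)) [DecidableRel G.Adj]
    (hconn : G.Connected) (l2 lN : ℝ)
    (hl2 : IsLeast {x : ℝ | x ∈ spectrum ℝ (G.lapMatrix ℝ) ∧ x ≠ 0} l2)
    (hlN : IsGreatest (spectrum ℝ (G.lapMatrix ℝ)) lN)
    (α γ₂ : ℝ) (hα : α = 2 / (l2 + lN)) (hγ₂ : γ₂ = (lN - l2) / (lN + l2))
    (W : Matrix (Fin N) (Fin N) ℝ) (hW : W = 1 - α • G.lapMatrix ℝ)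
    (μ σ : ℝ)
    {Ω : Type*} [MeasurableSpace Ω] (P : Measure Ω) [IsProbabilityMeasure P]
    (X0 : Ω → Fin N → ℝ)
    (hX0sq : ∀ n, MemLp (fun ω => X0 ω n) 2 P)
    (hcovX0 : (Matrix.of fun m n =>
        ∫ ω, (X0 ω m - ∫ ω', X0 ω' m ∂P) * (X0 ω n - ∫ ω', X0 ω' n ∂P) ∂P)
      = (4 * μ ^ 2 / σ ^ 2) • (1 : Matrix (Fin N) (Fin N) ℝ))
    (X : ℕ → Ω → Fin N → ℝ) (hX : ∀ i ω, X i ω = (W ^ i).mulVec (X0 ω)) :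
    (∀ (i : ℕ) (n : Fin N),
      (∫ ω, (X i ω n - ∫ ω', X i ω' n ∂P) ^ 2 ∂P)
        ≤ (4 * μ ^ 2 / σ ^ 2) * (1 / (N : ℝ) + γ₂ ^ (2 * i) * (1 - 1 / (N : ℝ)))) ∧
    Tendsto
      (fun i : ℕ =>
        (4 * μ ^ 2 / σ ^ 2) * (1 / (N : ℝ) + γ₂ ^ (2 * i) * (1 - 1 / (N : ℝ))))
      atTop (nhds (4 * μ ^ 2 / ((N : ℝ) * σ ^ 2))) := by
  have hl2_pos : 0 < l2 := (G.nonneg_of_mem_spectrum_lapMatrix_s10 hl2.1.1).lt_of_ne' hl2.1.2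
  have hl2_le : l2 ≤ lN := hlN.2 hl2.1.1
  have hWs : W.IsSymm := hW ▸ isSymm_one.sub ((G.isSymm_lapMatrix (R := ℝ)).smul α)
  have hW1 : W *ᵥ 1 = 1 := by
    have hL1 : G.lapMatrix ℝ *ᵥ 1 = 0 := G.lapMatrix_mulVec_const_eq_zero
    rw [hW, sub_mulVec, one_mulVec, smul_mulVec, hL1, smul_zero, sub_zero]
  have hcontr (v : Fin N → ℝ) (hv : ∑ i, v i = 0) :
      (W *ᵥ v) ⬝ᵥ (W *ᵥ v) ≤ γ₂ ^ 2 * (v ⬝ᵥ v) := by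
    subst hW hα hγ₂
    exact hconn.one_sub_smul_lapMatrix_mulVec_dotProduct_le hl2 hlN hv
  refine ⟨fun i n => ?_, ?_⟩
  · have hvar : ∫ ω, (X i ω n - ∫ ω', X i ω' n ∂P) ^ 2 ∂P
        = cov[fun ω => (W ^ i) n ⬝ᵥ X0 ω, fun ω => (W ^ i) n ⬝ᵥ X0 ω; P] := by
      simp only [hX, covariance, sq]
      rfl
    rw [hvar, covariance_dotProduct_self_of_covariance_eq_smul_one hX0sq hcovX0]
    gcongr
    simpa only [pow_mul, Fintype.card_fin] using (hWs.pow i).row_dotProduct_self_le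
      (pow_mulVec_eq_self hW1 i)
      (fun v hv => hWs.pow_mulVec_dotProduct_le hW1 (sq_nonneg _) hcontr i hv) n
  · have hγ₂_sq : γ₂ ^ 2 < 1 := by
      rw [hγ₂, div_pow, div_lt_one (pow_pos (by linarith) 2)]
      nlinarith
    have hpow : Tendsto (fun i : ℕ => γ₂ ^ (2 * i)) atTop (nhds 0) := by
      simpa only [pow_mul] using tendsto_pow_atTop_nhds_zero_of_lt_one (sq_nonneg γ₂) hγ₂_sq
    convert ((hpow.mul_const (1 - 1 / (N : ℝ))).const_add (1 / (N : ℝ))).const_mul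
      (4 * μ ^ 2 / σ ^ 2) using 2
    ring

/-- Per-sensor variance bound for noiseless average consensus on a
connected graph: with `W = I - α* L`, `γ₂ = (λ_N - λ₂)/(λ_N + λ₂)`,
`Cov(X₀) = (4μ²/σ²) I`, and `X_i = W^i X₀`, one has
`Var(X_n(i)) ≤ (4μ²/σ²)[1/N + γ₂^{2i}(1 - 1/N)]`, and this upper bound converges,
as `i → ∞`, to `4μ²/(Nσ²)`, the variance of the centralized fusion-center statistic. -/
theorem stmt10 (N : ℕ) (hN : 2 ≤ N) (G : SimpleGraph (Fin N)) [DecidableRel G.Adj]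
    (hconn : G.Connected) (l2 lN : ℝ)
    (hl2 : IsLeast {x : ℝ | x ∈ spectrum ℝ (G.lapMatrix ℝ) ∧ x ≠ 0} l2)
    (hlN : IsGreatest (spectrum ℝ (G.lapMatrix ℝ)) lN)
    (α γ₂ : ℝ) (hα : α = 2 / (l2 + lN)) (hγ₂ : γ₂ = (lN - l2) / (lN + l2))
    (W : Matrix (Fin N) (Fin N) ℝ) (hW : W = 1 - α • G.lapMatrix ℝ)
    (μ σ : ℝ) (hμ : 0 < μ) (hσ : 0 < σ)
    {Ω : Type*} [MeasurableSpace Ω] (P : Measure Ω) [IsProbabilityMeasure P]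
    (X0 : Ω → Fin N → ℝ) (hX0meas : Measurable X0)
    (hX0sq : ∀ n, MemLp (fun ω => X0 ω n) 2 P)
    (hcovX0 : (Matrix.of fun m n =>
        ∫ ω, (X0 ω m - ∫ ω', X0 ω' m ∂P) * (X0 ω n - ∫ ω', X0 ω' n ∂P) ∂P)
      = (4 * μ ^ 2 / σ ^ 2) • (1 : Matrix (Fin N) (Fin N) ℝ))
    (X : ℕ → Ω → Fin N → ℝ) (hX : ∀ i ω, X i ω = (W ^ i).mulVec (X0 ω)) :
    (∀ (i : ℕ) (n : Fin N),
      (∫ ω, (X i ω n - ∫ ω', X i ω' n ∂P) ^ 2 ∂P)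
        ≤ (4 * μ ^ 2 / σ ^ 2) * (1 / (N : ℝ) + γ₂ ^ (2 * i) * (1 - 1 / (N : ℝ)))) ∧
    Tendsto
      (fun i : ℕ =>
        (4 * μ ^ 2 / σ ^ 2) * (1 / (N : ℝ) + γ₂ ^ (2 * i) * (1 - 1 / (N : ℝ))))
      atTop (nhds (4 * μ ^ 2 / ((N : ℝ) * σ ^ 2))) :=
  stmt10_general N G hconn l2 lN hl2 hlN α γ₂ hα hγ₂ W hW μ σ P X0 hX0sq hcovX0 X hX
end

section
/- (Alon–Boppana.) Fix an integer k ≥ 3. Let (G_m)_{m≥1} be a sequence of connected k-regular simple graphs whose numbers of vertices N_m tend to infinity, and for each m let λ_{G_m}(A) denote the largest absolute value of an eigenvalue of the adjacency matrix of G_m that is distinct from ±k. Then liminf_{m→∞} λ_{G_m}(A) ≥ 2√(k−1). -/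
/-!
The trace method. For a connected `k`-regular graph on `N` vertices, `tr A^{2l}` counts closed
walks of length `2l`, and from every vertex there are at least `catalan l * (k-1)^l` of them: walk
around a rooted plane tree with `l` edges, choosing each child among the `k - 1` neighbours other
than the parent; different labelled trees give different walks. On the other hand
`tr A^{2l} = ∑ λᵢ^{2l} ≤ 2 k^{2l} + N λ^{2l}`, because connectedness forces each of `±k` to have
multiplicity at most one. So `λ^{2l} ≥ catalan l * (k-1)^l - 2 k^{2l} / N`; let `N → ∞`, then
`l → ∞`, using `catalan l ^ (1/l) → 4`.
-/

open Filter Finset Matrix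

namespace BinaryTree

variable {α : Type*}

def label : (u : BinaryTree Unit) → (Fin u.numNodes → α) → BinaryTree α
  | nil, _ => nil
  | node _ s t, f =>
      node (f (Fin.last _)) (label s fun i => f (Fin.castAdd t.numNodes i).castSucc)
        (label t fun i => f (Fin.natAdd s.numNodes i).castSucc)

@[simp]
theorem numNodes_label (u : BinaryTree Unit) (f : Fin u.numNodes → α) :
    (label u f).numNodes = u.numNodes := by
  induction u with
  | nil => rfl
  | node _ s t ihs iht => simp [label, numNodes, ihs, iht]

@[simp]
theorem map_label (u : BinaryTree Unit) (f : Fin u.numNodes → α) :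
    (label u f).map (fun _ => ()) = u := by
  induction u with
  | nil => rfl
  | node _ s t ihs iht => simp [label, map, ihs, iht]

theorem label_injective (u : BinaryTree Unit) : Function.Injective (label (α := α) u) := by
  induction u with
  | nil => intro f g _; funext i; exact i.elim0
  | node _ s t ihs iht =>
    intro f g h
    simp only [label, node.injEq] at h
    obtain ⟨hroot, hs, ht⟩ := h
    have hs := congrFun (ihs hs)
    have ht := congrFun (iht ht)
    funext i
    induction i using Fin.lastCases with
    | last => exact hroot
    | cast i =>
      induction i using Fin.addCases with
      | left i => exact hs i
      | right i => exact ht i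

theorem catalan_mul_pow_le_card_of_injective {β : Type*} [Fintype α] [Fintype β] {n : ℕ}
    (e : {t : BinaryTree α // t.numNodes = n} → β) (he : Function.Injective e) :
    catalan n * Fintype.card α ^ n ≤ Fintype.card β := by
  let labelling (q : treesOfNumNodesEq n × (Fin n → α)) : {t : BinaryTree α // t.numNodes = n} :=
    have hq : q.1.1.numNodes = n := mem_treesOfNumNodesEq.1 q.1.2
    ⟨label q.1.1 (q.2 ∘ Fin.cast hq), by simpa using hq⟩
  have hlabelling : Function.Injective labelling := by
    rintro ⟨⟨u, hu⟩, f⟩ ⟨⟨u', hu'⟩, f'⟩ h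
    have h : label u (f ∘ Fin.cast _) = label u' (f' ∘ Fin.cast _) := congrArg Subtype.val h
    obtain rfl : u = u' := by simpa using congrArg (map fun _ => ()) h
    obtain rfl : f = f' := funext fun i => by
      simpa using congrFun (label_injective u h) (Fin.cast (mem_treesOfNumNodesEq.1 hu).symm i)
    rfl
  calc catalan n * Fintype.card α ^ n
      = Fintype.card (treesOfNumNodesEq n × (Fin n → α)) := by
        simp [treesOfNumNodesEq_card_eq_catalan]
    _ ≤ Fintype.card β := Fintype.card_le_of_injective _ (he.comp hlabelling)

end BinaryTree

theorem Matrix.IsHermitian.trace_pow_eq_sum_eigenvalues_pow {𝕜 n : Type*} [RCLike 𝕜] [Fintype n]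
    [DecidableEq n] {A : Matrix n n 𝕜} (hA : A.IsHermitian) (p : ℕ) :
    (A ^ p).trace = ∑ i, (hA.eigenvalues i : 𝕜) ^ p := by
  conv_lhs => rw [hA.spectral_theorem, ← map_pow, Unitary.conjStarAlgAut_apply, trace_mul_cycle,
    Unitary.coe_star_mul_self, one_mul, diagonal_pow, trace_diagonal]
  simp

namespace SimpleGraph

variable {V : Type*} {G : SimpleGraph V}

theorem Reachable.induction_of_adj {P : V → Prop} (hP : ∀ u v, G.Adj u v → P u → P v) {u v : V}
    (h : G.Reachable u v) (hu : P u) : P v := by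
  obtain ⟨w⟩ := h
  induction w with
  | nil => exact hu
  | cons huv _ ih => exact ih (hP _ _ huv hu)

theorem Preconnected.apply_eq_of_forall_adj {β : Type*} {f : V → β} (hG : G.Preconnected)
    (hf : ∀ u v, G.Adj u v → f u = f v) (u v : V) : f u = f v :=
  (hG u v).induction_of_adj (P := fun w => f u = f w) (fun _ _ h hw => hw.trans (hf _ _ h)) rfl

section ClosedWalks

variable {r : ℕ}

/-- At a vertex `x` entered from `p`, a choice of `r` distinct neighbours of `x` other than `p`. -/
structure ChildChoice (G : SimpleGraph V) (r : ℕ) where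
  child : V → V → Fin r → V
  adj_child : ∀ x p a, G.Adj x (child x p a)
  child_ne : ∀ x p a, child x p a ≠ p
  child_injective : ∀ x p, Function.Injective (child x p)

namespace ChildChoice

variable (c : G.ChildChoice r)

/-- The depth-first walk around a rooted tree in the first-child/next-sibling encoding: at a
node labelled `a`, step to the child `a` of `x`, walk around its subtree, step back to `x`,
and continue with the siblings. -/
def walk : BinaryTree (Fin r) → (x p : V) → G.Walk x x
  | .nil, _, _ => .nil
  | .node a l s, x, p =>
      .cons (c.adj_child x p a)
        ((walk l (c.child x p a) x).append (.cons (c.adj_child x p a).symm (walk s x p)))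

def visits : BinaryTree (Fin r) → (x p : V) → List V
  | .nil, _, _ => []
  | .node a l s, x, p =>
      c.child x p a :: (visits l (c.child x p a) x ++ x :: visits s x p)

theorem length_walk (t : BinaryTree (Fin r)) (x p : V) :
    (c.walk t x p).length = 2 * t.numNodes := by
  induction t generalizing x p with
  | nil => rfl
  | node a l s ihl ihs =>
    simp only [walk, Walk.length_cons, Walk.length_append, ihl, ihs, BinaryTree.numNodes]
    ring

theorem support_walk (t : BinaryTree (Fin r)) (x p : V) :
    (c.walk t x p).support = x :: c.visits t x p := by
  induction t generalizing x p with
  | nil => rfl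
  | node a l s ihl ihs => simp [walk, visits, Walk.support_append, ihl, ihs]

/-- The sequence of visited vertices is prefix-free: a subtree walk ends exactly when the walk
first steps back to the parent. -/
theorem visits_append_cons_inj {l l' : BinaryTree (Fin r)} {z x : V} {R R' : List V}
    (h : c.visits l z x ++ x :: R = c.visits l' z x ++ x :: R') : l = l' ∧ R = R' := by
  induction l generalizing l' z x R R' with
  | nil =>
    cases l' with
    | nil => simpa [visits] using h
    | node a' _ _ => exact absurd (List.cons.inj h).1.symm (c.child_ne z x a')
  | node a l s ihl ihs =>
    cases l' with
    | nil => exact absurd (List.cons.inj h).1 (c.child_ne z x a)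
    | node a' l' s' =>
      simp only [visits, List.cons_append, List.append_assoc, List.cons.injEq] at h
      obtain ⟨ha, h⟩ := h
      obtain rfl := c.child_injective z x ha
      obtain ⟨rfl, hsiblings⟩ := ihl h
      obtain ⟨rfl, rfl⟩ := ihs hsiblings
      exact ⟨rfl, rfl⟩

theorem walk_injective (x p : V) : Function.Injective fun t => c.walk t x p := by
  intro t t' h
  have h : c.visits t x p = c.visits t' x p := by
    simpa [support_walk] using congrArg Walk.support h
  exact (c.visits_append_cons_inj (R := []) (R' := []) (by rw [h])).1

end ChildChoice

theorem nonempty_childChoice [Fintype V] [DecidableRel G.Adj] (h : ∀ v, r + 1 ≤ G.degree v) :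
    Nonempty (G.ChildChoice r) := by
  classical
  have (x p : V) : Nonempty (Fin r ↪ (G.neighborFinset x).erase p) := by
    apply Function.Embedding.nonempty_of_card_le
    have := pred_card_le_card_erase (s := G.neighborFinset x) (a := p)
    simp only [Fintype.card_fin, Fintype.card_coe, card_neighborFinset_eq_degree] at this ⊢
    have := h x
    omega
  let e x p := (this x p).some
  exact ⟨{ child x p a := e x p a
           adj_child x p a := (mem_neighborFinset _ _ _).1 (mem_of_mem_erase (e x p a).2)
           child_ne x p a := ne_of_mem_erase (e x p a).2
           child_injective x p := Subtype.val_injective.comp (e x p).injective }⟩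

theorem catalan_mul_pow_le_card_walk [Fintype V] [DecidableEq V] [DecidableRel G.Adj]
    (h : ∀ v, r + 1 ≤ G.degree v) (x : V) (n : ℕ) :
    catalan n * r ^ n ≤ Fintype.card {w : G.Walk x x | w.length = 2 * n} := by
  obtain ⟨c⟩ := nonempty_childChoice h
  rw [← Fintype.card_fin r]
  exact BinaryTree.catalan_mul_pow_le_card_of_injective
    (fun t : {t : BinaryTree (Fin r) // t.numNodes = n} =>
      (⟨c.walk t x x, by simp [c.length_walk, t.2]⟩ : {w : G.Walk x x | w.length = 2 * n}))
    fun t t' h => Subtype.ext (c.walk_injective x x (congrArg Subtype.val h))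

end ClosedWalks

namespace IsRegularOfDegree

variable [Fintype V] [DecidableRel G.Adj] {k : ℕ}

theorem ne_zero_of_adj (hreg : G.IsRegularOfDegree k) {u v : V} (huv : G.Adj u v) : k ≠ 0 := by
  rw [← hreg u]; exact (G.degree_pos_iff_exists_adj u).2 ⟨v, huv⟩ |>.ne'

theorem abs_apply_eq_of_degree_mul_apply_eq (hreg : G.IsRegularOfDegree k) {f : V → ℝ} {μ : ℝ}
    (hμ : |μ| = k) {u v : V} (huv : G.Adj u v) (h : k * f v = μ * f u) : |f v| = |f u| := by
  have := congrArg abs h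
  rw [abs_mul, abs_mul, hμ, Nat.abs_cast] at this
  exact mul_left_cancel₀ (Nat.cast_ne_zero.2 (hreg.ne_zero_of_adj huv)) this

/-- Maximum principle: at a vertex `u` where `|f|` is maximal, `μ f(u) f(v) ≤ k |f(u)|²` for each
of the `k` neighbours `v`, and these terms sum to `μ² f(u)² = k² |f(u)|²`, so all are equalities. -/
theorem degree_mul_apply_eq_of_adj (hconn : G.Connected) (hreg : G.IsRegularOfDegree k)
    {f : V → ℝ} {μ : ℝ} (hf : G.adjMatrix ℝ *ᵥ f = μ • f) (hμ : |μ| = k) {u v : V}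
    (huv : G.Adj u v) : k * f v = μ * f u := by
  have := hconn.nonempty
  obtain ⟨w, -, hw⟩ := exists_max_image univ (|f ·|) univ_nonempty
  set M := |f w|
  have hμ2 : μ ^ 2 = k ^ 2 := by rw [← sq_abs, hμ]
  have step (u v : V) (huv : G.Adj u v) (hu : |f u| = M) : k * f v = μ * f u := by
    have hfu : f u ^ 2 = M ^ 2 := by rw [← sq_abs, hu]
    have hle : ∀ v ∈ G.neighborFinset u, μ * f u * f v ≤ k * M ^ 2 := fun v _ =>
      calc μ * f u * f v ≤ |μ| * |f u| * |f v| := by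
            rw [← abs_mul, ← abs_mul]; exact le_abs_self _
        _ ≤ k * M * M := by rw [hμ, hu]; gcongr; exact hw v (mem_univ v)
        _ = k * M ^ 2 := by ring
    have hsum : ∑ v ∈ G.neighborFinset u, μ * f u * f v =
        ∑ v ∈ G.neighborFinset u, k * M ^ 2 := by
      rw [← mul_sum, ← adjMatrix_mulVec_apply, hf, sum_const, card_neighborFinset_eq_degree,
        hreg u, Pi.smul_apply, smul_eq_mul, nsmul_eq_mul]
      linear_combination f u ^ 2 * hμ2 + (k : ℝ) ^ 2 * hfu
    have heq := (sum_eq_sum_iff_of_le hle).1 hsum v ((mem_neighborFinset _ _ _).2 huv)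
    have hfv : f v ^ 2 ≤ M ^ 2 := by
      rw [← sq_abs]; exact pow_le_pow_left₀ (abs_nonneg _) (hw v (mem_univ v)) 2
    have : (k * f v - μ * f u) ^ 2 ≤ 0 := by nlinarith
    nlinarith [sq_nonneg (k * f v - μ * f u)]
  have hmax (v : V) : |f v| = M :=
    (hconn.preconnected w v).induction_of_adj (fun u v huv hu =>
      (hreg.abs_apply_eq_of_degree_mul_apply_eq hμ huv (step u v huv hu)).trans hu) rfl
  exact step u v huv (hmax u)

/-- Along every edge both `|f|` and `f g` are preserved, so both are constant; orthogonality
then forces `f g ≡ 0`, so `f` or `g` vanishes at one vertex, hence everywhere. -/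
theorem eq_zero_or_eq_zero_of_dotProduct_eq_zero (hconn : G.Connected)
    (hreg : G.IsRegularOfDegree k) {f g : V → ℝ} {μ : ℝ} (hf : G.adjMatrix ℝ *ᵥ f = μ • f)
    (hg : G.adjMatrix ℝ *ᵥ g = μ • g) (hμ : |μ| = k) (hfg : f ⬝ᵥ g = 0) : f = 0 ∨ g = 0 := by
  have habs {h : V → ℝ} (hh : G.adjMatrix ℝ *ᵥ h = μ • h) (u v : V) : |h u| = |h v| :=
    hconn.preconnected.apply_eq_of_forall_adj (f := (|h ·|)) (fun _ _ huv =>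
      (hreg.abs_apply_eq_of_degree_mul_apply_eq hμ huv
        (hreg.degree_mul_apply_eq_of_adj hconn hh hμ huv)).symm) u v
  have hprod (u v : V) : f u * g u = f v * g v := by
    refine hconn.preconnected.apply_eq_of_forall_adj (f := fun v => f v * g v)
      (fun u v huv => ?_) u v
    have hfv := hreg.degree_mul_apply_eq_of_adj hconn hf hμ huv
    have hgv := hreg.degree_mul_apply_eq_of_adj hconn hg hμ huv
    have hμ2 : μ ^ 2 = k ^ 2 := by rw [← sq_abs, hμ]
    apply mul_left_cancel₀ (pow_ne_zero 2 (Nat.cast_ne_zero.2 (hreg.ne_zero_of_adj huv)))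
    linear_combination -(f u * g u) * hμ2 - k * g v * hfv - μ * f u * hgv
  obtain ⟨w⟩ := hconn.nonempty
  have hw : f w * g w = 0 := by
    have : (Fintype.card V : ℝ) * (f w * g w) = 0 := by
      rw [← hfg, dotProduct, ← nsmul_eq_mul, ← card_univ, ← sum_const]
      exact sum_congr rfl fun v _ => hprod w v
    exact (mul_eq_zero.1 this).resolve_left (Nat.cast_ne_zero.2 (Fintype.card_pos_iff.2 ⟨w⟩).ne')
  rcases mul_eq_zero.1 hw with h | h
  · exact .inl <| funext fun v => abs_eq_zero.1 <| by rw [habs hf v w, h, abs_zero]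
  · exact .inr <| funext fun v => abs_eq_zero.1 <| by rw [habs hg v w, h, abs_zero]

variable [DecidableEq V]

theorem abs_le_of_mem_spectrum (hreg : G.IsRegularOfDegree k) {μ : ℝ}
    (hμ : μ ∈ spectrum ℝ (G.adjMatrix ℝ)) : |μ| ≤ k := by
  rw [← spectrum_toLin', ← Module.End.hasEigenvalue_iff_mem_spectrum] at hμ
  obtain ⟨v, hv⟩ := eigenvalue_mem_ball hμ
  have hrow : ∑ j ∈ univ.erase v, ‖G.adjMatrix ℝ v j‖ = k := by
    rw [sum_erase _ (by simp)]
    simpa [adjMatrix_apply, apply_ite, sum_boole, ← neighborFinset_eq_filter] using hreg v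
  rw [hrow, Metric.mem_closedBall] at hv
  simpa [Real.dist_eq] using hv

theorem card_eigenvalues_eq_le_one (hconn : G.Connected) (hreg : G.IsRegularOfDegree k)
    {μ : ℝ} (hμ : |μ| = k) : #{i | (G.isHermitian_adjMatrix ℝ).eigenvalues i = μ} ≤ 1 := by
  set hA := G.isHermitian_adjMatrix ℝ
  set b := hA.eigenvectorBasis
  refine card_le_one.2 fun i hi j hj => by_contra fun hij => ?_
  have hb (i : V) (hi : hA.eigenvalues i = μ) :
      G.adjMatrix ℝ *ᵥ (b i).ofLp = μ • (b i).ofLp := by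
    rw [hA.mulVec_eigenvectorBasis, hi]
  have horth : (b i).ofLp ⬝ᵥ (b j).ofLp = 0 := by
    simpa [EuclideanSpace.inner_eq_star_dotProduct, dotProduct_comm] using b.orthonormal.2 hij
  rcases hreg.eq_zero_or_eq_zero_of_dotProduct_eq_zero hconn (hb i (mem_filter.1 hi).2)
    (hb j (mem_filter.1 hj).2) hμ horth with h | h
  · exact b.orthonormal.ne_zero i (by simpa using h)
  · exact b.orthonormal.ne_zero j (by simpa using h)

theorem card_abs_eigenvalues_eq_le_two (hconn : G.Connected) (hreg : G.IsRegularOfDegree k) :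
    #{i | |(G.isHermitian_adjMatrix ℝ).eigenvalues i| = k} ≤ 2 := by
  set hA := G.isHermitian_adjMatrix ℝ
  calc #{i | |hA.eigenvalues i| = k}
      = #{i | hA.eigenvalues i = k ∨ hA.eigenvalues i = -k} := by
        simp_rw [abs_eq (Nat.cast_nonneg (α := ℝ) k)]
    _ ≤ 1 + 1 := by
        rw [filter_or]
        exact (card_union_le _ _).trans <| add_le_add
          (hreg.card_eigenvalues_eq_le_one hconn (Nat.abs_cast k))
          (hreg.card_eigenvalues_eq_le_one hconn (by rw [abs_neg, Nat.abs_cast]))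

theorem sum_eigenvalues_pow_le (hconn : G.Connected) (hreg : G.IsRegularOfDegree k) {lam : ℝ}
    (hlam : ∀ μ ∈ spectrum ℝ (G.adjMatrix ℝ), |μ| ≠ k → |μ| ≤ lam) (l : ℕ) :
    ∑ i, (G.isHermitian_adjMatrix ℝ).eigenvalues i ^ (2 * l) ≤
      2 * (k : ℝ) ^ (2 * l) + Fintype.card V * lam ^ (2 * l) := by
  set hA := G.isHermitian_adjMatrix ℝ
  have heven : Even (2 * l) := even_two_mul l
  rw [← sum_filter_add_sum_filter_not univ (|hA.eigenvalues ·| = k)]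
  gcongr
  · calc ∑ i with |hA.eigenvalues i| = k, hA.eigenvalues i ^ (2 * l)
        = #{i | |hA.eigenvalues i| = k} * (k : ℝ) ^ (2 * l) := by
          rw [← nsmul_eq_mul, ← sum_const]
          exact sum_congr rfl fun i hi => by rw [← heven.pow_abs, (mem_filter.1 hi).2]
      _ ≤ 2 * (k : ℝ) ^ (2 * l) := by
          gcongr; exact_mod_cast hreg.card_abs_eigenvalues_eq_le_two hconn
  · calc ∑ i with ¬|hA.eigenvalues i| = k, hA.eigenvalues i ^ (2 * l)
        ≤ ∑ i with ¬|hA.eigenvalues i| = k, lam ^ (2 * l) := by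
          refine sum_le_sum fun i hi => ?_
          rw [← heven.pow_abs]
          exact pow_le_pow_left₀ (abs_nonneg _)
            (hlam _ (hA.eigenvalues_mem_spectrum_real i) (mem_filter.1 hi).2) _
      _ ≤ ∑ i, lam ^ (2 * l) :=
          sum_le_sum_of_subset_of_nonneg (filter_subset _ _) fun _ _ _ => heven.pow_nonneg _
      _ = Fintype.card V * lam ^ (2 * l) := by simp

theorem card_mul_catalan_le (hk : 1 ≤ k) (hconn : G.Connected) (hreg : G.IsRegularOfDegree k)
    {lam : ℝ} (hlam : ∀ μ ∈ spectrum ℝ (G.adjMatrix ℝ), |μ| ≠ k → |μ| ≤ lam) (l : ℕ) :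
    Fintype.card V * (catalan l * ((k : ℝ) - 1) ^ l) ≤
      2 * (k : ℝ) ^ (2 * l) + Fintype.card V * lam ^ (2 * l) := by
  have hdeg (v : V) : k - 1 + 1 ≤ G.degree v := by rw [hreg v]; omega
  calc Fintype.card V * (catalan l * ((k : ℝ) - 1) ^ l)
      = ∑ _v : V, ((catalan l * (k - 1) ^ l : ℕ) : ℝ) := by simp [Nat.cast_sub hk]
    _ ≤ ∑ v, (G.adjMatrix ℝ ^ (2 * l)) v v := sum_le_sum fun v _ => by
        rw [adjMatrix_pow_apply_eq_card_walk]
        exact_mod_cast catalan_mul_pow_le_card_walk hdeg v l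
    _ = ∑ i, (G.isHermitian_adjMatrix ℝ).eigenvalues i ^ (2 * l) :=
        (G.isHermitian_adjMatrix ℝ).trace_pow_eq_sum_eigenvalues_pow _
    _ ≤ _ := hreg.sum_eigenvalues_pow_le hconn hlam l

end IsRegularOfDegree

end SimpleGraph

theorem four_pow_le_mul_catalan {n : ℕ} (hn : 0 < n) : 4 ^ n ≤ 2 * n * (n + 1) * catalan n := by
  rw [mul_assoc, succ_mul_catalan_eq_centralBinom]
  exact Nat.four_pow_le_two_mul_self_mul_centralBinom n hn

/-- Since `catalan l ≥ 4^l / (2l(l+1))`, the `2l`-th root of `catalan l · d^l` tends to `2 √d`. -/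
theorem exists_pow_lt_catalan_mul_pow {c d : ℝ} (h : c ^ 2 < 4 * d) :
    ∃ l, c ^ (2 * l) < catalan l * d ^ l := by
  have hd : 0 < d := by nlinarith [sq_nonneg c]
  set q := c ^ 2 / (4 * d)
  have hc : c ^ 2 = q * (4 * d) := by simp only [q]; field_simp
  have hq : q < 1 := (div_lt_one (by positivity)).2 h
  have hsmall := (tendsto_pow_const_mul_const_pow_of_lt_one 2 (by positivity) hq).eventually
    (gt_mem_nhds (by norm_num : (0 : ℝ) < 1 / 4))
  obtain ⟨l, hlq, hl⟩ := (hsmall.and (eventually_ge_atTop 1)).exists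
  have hcat : (4 : ℝ) ^ l ≤ 2 * l * (l + 1) * catalan l := by
    exact_mod_cast four_pow_le_mul_catalan hl
  have hl : (1 : ℝ) ≤ l := by exact_mod_cast hl
  refine ⟨l, lt_of_mul_lt_mul_right (a := 4 * (l : ℝ) ^ 2) ?_ (by positivity)⟩
  calc c ^ (2 * l) * (4 * l ^ 2) = 4 * (l ^ 2 * q ^ l) * (4 * d) ^ l := by
        rw [pow_mul, hc, mul_pow]; ring
    _ < 1 * (4 * d) ^ l := by gcongr; linarith
    _ = 4 ^ l * d ^ l := by rw [one_mul, mul_pow]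
    _ ≤ (4 * l ^ 2 * catalan l) * d ^ l := by
        gcongr
        nlinarith [mul_nonneg (mul_nonneg (zero_le_one.trans hl) (sub_nonneg.2 hl))
          (Nat.cast_nonneg (α := ℝ) (catalan l))]
    _ = catalan l * d ^ l * (4 * l ^ 2) := by ring

/-- **(Alon–Boppana.)** For a sequence of connected `k`-regular simple
graphs `G_m` (`k ≥ 3`) whose numbers of vertices `N_m` tend to infinity, if
`λ_{G_m}(A)` denotes the largest absolute value of an adjacency eigenvalue of `G_m`
distinct from `± k`, then `liminf_m λ_{G_m}(A) ≥ 2√(k-1)`. -/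
theorem stmt15 (k : ℕ) (hk : 3 ≤ k) (Nm : ℕ → ℕ)
    (G : ∀ m, SimpleGraph (Fin (Nm m))) [∀ m, DecidableRel (G m).Adj]
    (hconn : ∀ m, (G m).Connected) (hreg : ∀ m, (G m).IsRegularOfDegree k)
    (hNm : Tendsto Nm atTop atTop)
    (lam : ℕ → ℝ)
    (hlam : ∀ m, IsGreatest
      ((fun x : ℝ => |x|) '' {x : ℝ | x ∈ spectrum ℝ ((G m).adjMatrix ℝ) ∧ |x| ≠ (k : ℝ)})
      (lam m)) :
    2 * Real.sqrt ((k : ℝ) - 1) ≤ liminf lam atTop := by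
  have hbound (m : ℕ) : ∀ μ ∈ spectrum ℝ ((G m).adjMatrix ℝ), |μ| ≠ k → |μ| ≤ lam m :=
    fun μ hμ hne => (hlam m).2 ⟨μ, ⟨hμ, hne⟩, rfl⟩
  have hlam_mem (m : ℕ) : ∃ μ ∈ spectrum ℝ ((G m).adjMatrix ℝ), |μ| = lam m := by
    obtain ⟨μ, hμ, hμlam⟩ := (hlam m).1; exact ⟨μ, hμ.1, hμlam⟩
  have hlam_le (m : ℕ) : lam m ≤ k := by
    obtain ⟨μ, hμ, hμlam⟩ := hlam_mem m
    exact hμlam ▸ (hreg m).abs_le_of_mem_spectrum hμ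
  refine le_of_forall_lt_imp_le_of_dense fun c hc =>
    le_liminf_of_le (isCoboundedUnder_ge_of_le _ hlam_le) ?_
  have hc : max c 0 ^ 2 < 4 * ((k : ℝ) - 1) := by
    have hk1 : (0 : ℝ) < k - 1 := by rw [sub_pos]; exact_mod_cast (by omega : 1 < k)
    calc max c 0 ^ 2 < (2 * √((k : ℝ) - 1)) ^ 2 := by
          gcongr; exact max_lt hc (mul_pos two_pos (Real.sqrt_pos.2 hk1))
      _ = 4 * ((k : ℝ) - 1) := by rw [mul_pow, Real.sq_sqrt hk1.le]; norm_num
  obtain ⟨l, hl⟩ := exists_pow_lt_catalan_mul_pow hc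
  have hN : Tendsto (fun m => 2 * (k : ℝ) ^ (2 * l) / Nm m) atTop (nhds 0) :=
    tendsto_const_nhds.div_atTop (tendsto_natCast_atTop_atTop.comp hNm)
  filter_upwards [hN.eventually (gt_mem_nhds (sub_pos.2 hl)), hNm.eventually_gt_atTop 0]
    with m hsmall hpos
  have key := (hreg m).card_mul_catalan_le (by omega) (hconn m) (hbound m) l
  rw [Fintype.card_fin] at key
  rw [div_lt_iff₀ (by exact_mod_cast hpos)] at hsmall
  have hpow : max c 0 ^ (2 * l) < lam m ^ (2 * l) :=
    lt_of_mul_lt_mul_left (a := (Nm m : ℝ)) (by linarith) (Nat.cast_nonneg _)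
  obtain ⟨μ, -, hμ⟩ := hlam_mem m
  exact (le_max_left c 0).trans (lt_of_pow_lt_pow_left₀ _ (hμ ▸ abs_nonneg μ) hpow).le
end
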